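/- arXiv:1508.04533 — 4 statements merged into one kernel-verified Lean document; each statement's English description precedes it below -/
import Mathlib

section
/- Given constants λ₁*, λ₂* > 0 and b₁, b₂ ∈ ℝ, set Λ = λ₁* + λ₂*, B = (λ₂*·b₁ + λ₁*·b₂)/Λ, A₁ = λ₁*·(b₁ − b₂)/Λ², A₂ = λ₂*·(b₂ − b₁)/Λ², and define H₁(t) = B·t + A₁·(1 − e^{−Λt}), H₂(t) = B·t + A₂·(1 − e^{−Λt}) for t ≥ 0. Then (H₁, H₂) solves the Volterra system of integral equations H₁(t) = (b₁/λ₁*)·(1 − e^{−λ₁* t}) + ∫₀ᵗ H₂(t−u)·λ₁*·e^{−λ₁* u} du and H₂(t) = (b₂/λ₂*)·(1 − e^{−λ₂* t}) + ∫₀ᵗ H₁(t−u)·λ₂*·e^{−λ₂* u} du for all t ≥ 0. -/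
/-!
Against the exponential kernel `l e^{-lu}`, the convolution of `s ↦ B s + A (1 - e^{-Λ s})` has the
closed form given by an explicit antiderivative; it is a combination of `1`, `t`, `e^{-lt}` and
`e^{-Λt}`. With `Λ - λ₁ = λ₂` and `Λ - λ₂ = λ₁`, the constants `B`, `A₁`, `A₂` are exactly those that
make these coefficients agree on both sides of each equation.
-/

open MeasureTheory Real

theorem integral_affine_add_exp_mul_exp_kernel (B A Λ l t : ℝ) (hl : l ≠ 0) (hΛl : Λ - l ≠ 0) :
    ∫ u in (0:ℝ)..t, (B * (t - u) + A * (1 - exp (-Λ * (t - u)))) * (l * exp (-l * u))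
      = B * t + (A - B / l) * (1 - exp (-l * t)) - A * l / (Λ - l) * (exp (-l * t) - exp (-Λ * t)) := by
  have hF : ∀ u, HasDerivAt
      (fun u => (B / l - A - B * (t - u) - A * l / (Λ - l) * exp (-Λ * (t - u))) * exp (-l * u))
      ((B * (t - u) + A * (1 - exp (-Λ * (t - u)))) * (l * exp (-l * u))) u := by
    intro u
    refine (((((hasDerivAt_id' u).const_sub t).const_mul B).const_sub (B / l - A)).fun_sub
      ((((hasDerivAt_id' u).const_sub t).const_mul (-Λ)).exp.const_mul (A * l / (Λ - l)))).fun_mul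
      (((hasDerivAt_id' u).const_mul (-l)).exp) |>.congr_deriv ?_
    field_simp
    ring
  rw [intervalIntegral.integral_eq_sub_of_hasDerivAt (fun u _ => hF u)
    ((by fun_prop : Continuous _).intervalIntegrable _ _)]
  simp only [sub_self, sub_zero, mul_zero, exp_zero, mul_one]
  field_simp
  ring

/-- The explicit relative entropy functions `H₁, H₂` of the two-state
constant-parameter regime-switching model solve the Volterra system of integral
equations with exponential kernels of rates `λ₁*, λ₂*`. -/
theorem stmt2 (l1 l2 b1 b2 : ℝ) (hl1 : 0 < l1) (hl2 : 0 < l2)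
    (Λ B A1 A2 : ℝ) (H1 H2 : ℝ → ℝ)
    (hΛ : Λ = l1 + l2)
    (hB : B = (l2 * b1 + l1 * b2) / Λ)
    (hA1 : A1 = l1 * (b1 - b2) / Λ ^ 2)
    (hA2 : A2 = l2 * (b2 - b1) / Λ ^ 2)
    (hH1 : ∀ t, H1 t = B * t + A1 * (1 - Real.exp (-Λ * t)))
    (hH2 : ∀ t, H2 t = B * t + A2 * (1 - Real.exp (-Λ * t))) :
    ∀ t, 0 ≤ t →
      (H1 t = (b1 / l1) * (1 - Real.exp (-l1 * t))
          + ∫ u in (0:ℝ)..t, H2 (t - u) * (l1 * Real.exp (-l1 * u))) ∧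
      (H2 t = (b2 / l2) * (1 - Real.exp (-l2 * t))
          + ∫ u in (0:ℝ)..t, H1 (t - u) * (l2 * Real.exp (-l2 * u))) := by
  intro t _
  have hΛl1 : Λ - l1 = l2 := by linarith
  have hΛl2 : Λ - l2 = l1 := by linarith
  have hΛ0 : Λ ≠ 0 := by linarith
  simp only [hH1, hH2]
  rw [integral_affine_add_exp_mul_exp_kernel _ _ _ _ _ hl1.ne' (hΛl1 ▸ hl2.ne'),
    integral_affine_add_exp_mul_exp_kernel _ _ _ _ _ hl2.ne' (hΛl2 ▸ hl1.ne'), hΛl1, hΛl2]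
  subst hB hA1 hA2
  constructor <;> field_simp <;> rw [hΛ] <;> ring
end

section
/- For real parameters λ₀ > 0, α > 0, C ∈ ℝ, let λ* > 0 be the unique solution of C²·(λ* − α) + log(λ*/λ₀) = 0. Then min(λ₀, α) ≤ λ* ≤ max(λ₀, α), i.e. the minimizer λ* always lies between λ₀ and α. -/
/-! Both summands of `c (x - a) + log (x / b)` with `c ≥ 0` have the sign of `x` compared with
`a`, respectively `b`, and the logarithm vanishes only at `x = b`; so the sum cannot vanish
when `x` lies strictly below, or strictly above, both `a` and `b`. -/

open Real

theorem min_le_and_le_max_of_mul_sub_add_log_div_eq_zero {a b c x : ℝ} (hb : 0 < b) (hx : 0 < x)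
    (hc : 0 ≤ c) (h : c * (x - a) + log (x / b) = 0) : min b a ≤ x ∧ x ≤ max b a := by
  constructor
  · rw [min_le_iff]
    by_contra! hlt
    have hlog : log (x / b) < 0 := log_neg (div_pos hx hb) ((div_lt_one hb).2 hlt.1)
    have hlin : c * (x - a) ≤ 0 := mul_nonpos_of_nonneg_of_nonpos hc (by linarith [hlt.2])
    linarith
  · rw [le_max_iff]
    by_contra! hgt
    have hlog : 0 < log (x / b) := log_pos ((one_lt_div hb).2 hgt.1)
    have hlin : 0 ≤ c * (x - a) := mul_nonneg hc (by linarith [hgt.2])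
    linarith

theorem stmt9_general (l0 α C : ℝ) (hl0 : 0 < l0)
    (lstar : ℝ) (hlstar : 0 < lstar)
    (hcrit : C ^ 2 * (lstar - α) + Real.log (lstar / l0) = 0) :
    min l0 α ≤ lstar ∧ lstar ≤ max l0 α :=
  min_le_and_le_max_of_mul_sub_add_log_div_eq_zero hl0 hlstar (sq_nonneg C) hcrit

/-- The unique solution `λ* > 0` of `C²(λ* − α) + log(λ*/λ₀) = 0` always lies between
the original intensity `λ₀` and the pure jump-telegraph martingale intensity `α`. -/
theorem stmt9 (l0 α C : ℝ) (hl0 : 0 < l0) (hα : 0 < α)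
    (lstar : ℝ) (hlstar : 0 < lstar)
    (hcrit : C ^ 2 * (lstar - α) + Real.log (lstar / l0) = 0) :
    min l0 α ≤ lstar ∧ lstar ≤ max l0 α :=
  stmt9_general l0 α C hl0 lstar hlstar hcrit
end

section
/- For real parameters λ₀ > 0, α ∈ ℝ, C ∈ ℝ, define b(λ) = λ₀ − λ + λ·log(λ/λ₀) + (C²/2)·(λ − α)² and b'(λ) = C²·(λ − α) + log(λ/λ₀) for λ > 0. Fix λ₂ > 0 and k ∈ ℝ. Then the function Φ(λ₁) = (λ₁ + λ₂)·b'(λ₁) + k − b(λ₁) is strictly increasing on (0,∞), tends to −∞ as λ₁ → 0⁺ and to +∞ as λ₁ → ∞; consequently Φ has a unique zero in (0,∞). -/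
open Filter Topology

/-! Expanding `Φ`, the terms `λ log (λ / λ₀)` cancel and
`Φ(λ) = C²/2 ((λ + λ₂)² − (α + λ₂)²) + λ + k − λ₀ + λ₂ log (λ / λ₀)`, whose derivative
`C² (λ + λ₂) + 1 + λ₂ / λ` is positive on `(0, ∞)`. The logarithm drives `Φ` to `−∞` at `0⁺`;
since `Φ(λ) ≥ λ + λ₂ log (λ / λ₀) + const`, it tends to `+∞`. The zero then comes from the
intermediate value theorem and its uniqueness from strict monotonicity. -/

open Set in
theorem StrictMonoOn.existsUnique_eq_of_tendsto_Ioi {α δ : Type*}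
    [ConditionallyCompleteLinearOrder α] [TopologicalSpace α] [OrderTopology α]
    [DenselyOrdered α] [NoMaxOrder α]
    [LinearOrder δ] [TopologicalSpace δ] [OrderClosedTopology δ] {f : α → δ} {a : α}
    (hf : StrictMonoOn f (Ioi a)) (hcont : ContinuousOn f (Ioi a))
    (hbot : Tendsto f (𝓝[>] a) atBot) (htop : Tendsto f atTop atTop) (y : δ) :
    ∃! x, a < x ∧ f x = y := by
  obtain ⟨x, hx, rfl⟩ := hcont.surjOn_of_tendsto nonempty_Ioi
    ((tendsto_comp_coe_Ioi_atBot (f := f)).2 hbot) (tendsto_comp_val_Ioi_atTop.2 htop) (mem_univ y)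
  exact ⟨x, ⟨hx, rfl⟩, fun x' hx' => hf.injOn hx'.1 hx hx'.2⟩

noncomputable def criticalPhi (l0 α C l2 k l : ℝ) : ℝ :=
  C ^ 2 / 2 * ((l + l2) ^ 2 - (α + l2) ^ 2) + l + k - l0 + l2 * Real.log (l / l0)

section criticalPhi

variable {l0 α C l2 k : ℝ}

theorem hasDerivAt_criticalPhi (hl0 : l0 ≠ 0) {x : ℝ} (hx : x ≠ 0) :
    HasDerivAt (criticalPhi l0 α C l2 k) (C ^ 2 * (x + l2) + 1 + l2 / x) x := by
  have hlog : HasDerivAt (fun l => Real.log (l / l0)) x⁻¹ x := by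
    refine (((hasDerivAt_id' x).div_const l0).log (div_ne_zero hx hl0)).congr_deriv ?_
    field_simp
  have hquad : HasDerivAt (fun l => C ^ 2 / 2 * ((l + l2) ^ 2 - (α + l2) ^ 2) + l + k - l0)
      (C ^ 2 * (x + l2) + 1) x := by
    refine ((((((hasDerivAt_id' x).add_const l2).fun_pow 2).sub_const ((α + l2) ^ 2)).const_mul
      (C ^ 2 / 2)).fun_add (hasDerivAt_id' x) |>.add_const k |>.sub_const l0).congr_deriv ?_
    push_cast
    ring
  exact (hquad.fun_add (hlog.const_mul l2)).congr_deriv (by ring)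

theorem continuousOn_criticalPhi (hl0 : l0 ≠ 0) :
    ContinuousOn (criticalPhi l0 α C l2 k) (Set.Ioi 0) := fun _ hx =>
  (hasDerivAt_criticalPhi hl0 (ne_of_gt hx)).continuousAt.continuousWithinAt

theorem strictMonoOn_criticalPhi (hl0 : l0 ≠ 0) (hl2 : 0 ≤ l2) :
    StrictMonoOn (criticalPhi l0 α C l2 k) (Set.Ioi 0) := by
  refine strictMonoOn_of_deriv_pos (convex_Ioi 0) (continuousOn_criticalPhi hl0) fun x hx => ?_
  rw [interior_Ioi] at hx
  have hx : 0 < x := hx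
  rw [(hasDerivAt_criticalPhi hl0 hx.ne').deriv]
  positivity

theorem tendsto_criticalPhi_nhdsGT_zero (hl0 : 0 < l0) (hl2 : 0 < l2) :
    Tendsto (criticalPhi l0 α C l2 k) (𝓝[>] 0) atBot := by
  have hdiv : Tendsto (fun l => l / l0) (𝓝[>] 0) (𝓝[>] 0) := by
    refine tendsto_nhdsWithin_iff.2
      ⟨?_, eventually_nhdsWithin_of_forall fun l hl => div_pos hl hl0⟩
    exact ((continuous_id.div_const l0).tendsto' 0 0 (zero_div l0)).mono_left nhdsWithin_le_nhds
  have hpoly : Tendsto (fun l : ℝ => C ^ 2 / 2 * ((l + l2) ^ 2 - (α + l2) ^ 2) + l + k - l0)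
      (𝓝[>] 0) (𝓝 (C ^ 2 / 2 * ((0 + l2) ^ 2 - (α + l2) ^ 2) + 0 + k - l0)) :=
    (Continuous.tendsto (by fun_prop) 0).mono_left nhdsWithin_le_nhds
  exact hpoly.add_atBot ((Real.tendsto_log_nhdsGT_zero.comp hdiv).const_mul_atBot hl2)

theorem tendsto_criticalPhi_atTop (hl0 : 0 < l0) (hl2 : 0 < l2) :
    Tendsto (criticalPhi l0 α C l2 k) atTop atTop := by
  have hlog : Tendsto (fun l => Real.log (l / l0)) atTop atTop :=
    Real.tendsto_log_atTop.comp (tendsto_id.atTop_div_const hl0)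
  have hlower : Tendsto
      (fun l => l + l2 * Real.log (l / l0) + (k - l0 - C ^ 2 / 2 * (α + l2) ^ 2)) atTop atTop :=
    tendsto_atTop_add_const_right _ _ (tendsto_id.atTop_add_atTop (hlog.const_mul_atTop hl2))
  refine tendsto_atTop_mono (fun l => ?_) hlower
  unfold criticalPhi
  nlinarith [mul_nonneg (sq_nonneg C) (sq_nonneg (l + l2))]

end criticalPhi

/-- The first component `Φ(λ₁) = (λ₁ + λ₂) b'(λ₁) + k − b(λ₁)` of the critical-point
system of the long-term minimal entropy problem is strictly increasing on `(0, ∞)`,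
tends to `−∞` at `0⁺` and to `+∞` at `+∞`; hence it has a unique zero in `(0, ∞)`. -/
theorem stmt10 (l0 α C : ℝ) (hl0 : 0 < l0) (l2 k : ℝ) (hl2 : 0 < l2)
    (b b' Φ : ℝ → ℝ)
    (hb : ∀ l, b l = l0 - l + l * Real.log (l / l0) + C ^ 2 / 2 * (l - α) ^ 2)
    (hb' : ∀ l, b' l = C ^ 2 * (l - α) + Real.log (l / l0))
    (hΦ : ∀ l, Φ l = (l + l2) * b' l + k - b l) :
    StrictMonoOn Φ (Set.Ioi (0:ℝ)) ∧
    Tendsto Φ (𝓝[>] (0:ℝ)) atBot ∧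
    Tendsto Φ atTop atTop ∧
    (∃! l : ℝ, 0 < l ∧ Φ l = 0) := by
  obtain rfl : Φ = criticalPhi l0 α C l2 k := funext fun l => by
    rw [hΦ, hb, hb', criticalPhi]
    ring
  have hmono : StrictMonoOn (criticalPhi l0 α C l2 k) (Set.Ioi 0) :=
    strictMonoOn_criticalPhi hl0.ne' hl2.le
  have hbot : Tendsto (criticalPhi l0 α C l2 k) (𝓝[>] 0) atBot :=
    tendsto_criticalPhi_nhdsGT_zero hl0 hl2
  have htop : Tendsto (criticalPhi l0 α C l2 k) atTop atTop := tendsto_criticalPhi_atTop hl0 hl2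
  exact ⟨hmono, hbot, htop,
    hmono.existsUnique_eq_of_tendsto_Ioi (continuousOn_criticalPhi hl0.ne') hbot htop 0⟩
end

section
/- Let λ₀ > 0, α ∈ ℝ, C ≠ 0, define b(λ) = λ₀ − λ + λ·log(λ/λ₀) + (C²/2)·(λ − α)² for λ > 0, and let λ* > 0 be its unique global minimizer (the unique solution of C²·(λ* − α) + log(λ*/λ₀) = 0). For λ₁, λ₂ > 0 set Λ = λ₁ + λ₂, B(λ₁,λ₂) = (λ₂·b(λ₁) + λ₁·b(λ₂))/Λ, A₁(λ₁,λ₂) = λ₁·(b(λ₁) − b(λ₂))/Λ², A₂(λ₁,λ₂) = λ₂·(b(λ₂) − b(λ₁))/Λ², and for t > 0 define H₁(t; λ₁, λ₂) = B·t + A₁·(1 − e^{−Λt}) and H₂(t; λ₁, λ₂) = B·t + A₂·(1 − e^{−Λt}). Then for every t > 0 and all λ₁, λ₂ > 0 one has Hᵢ(t; λ₁, λ₂) ≥ b(λ*)·t for i = 1, 2, with equality if and only if λ₁ = λ₂ = λ*. In particular, for each fixed t > 0 the functions (λ₁, λ₂) ↦ Hᵢ(t; λ₁, λ₂) attain their minimum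 on (0,∞)² at the unique point (λ*, λ*), which does not depend on t. -/
/-!
Writing `E = e^{-Λt}`, both `Hᵢ` are combinations `p b(λᵢ) + q b(λⱼ)` with `p + q = t` and
`p, q > 0`; positivity of the weight `λᵢ (Λt - (1 - E)) / Λ²` of the other state is
`1 - e^{-x} < x` for `x > 0`. So `Hᵢ ≥ b(λ*) t`, with equality only if `b(λ₁) = b(λ₂) = b(λ*)`.
The critical-point equation turns `b λ - b λ*` into `λ* - λ + λ log(λ/λ*) + C²/2 (λ - λ*)²`,
which is positive for `λ ≠ λ*` by `log x < x - 1`.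
-/

open Real Set

noncomputable def entropyRate (l0 α C l : ℝ) : ℝ :=
  l0 - l + l * log (l / l0) + C ^ 2 / 2 * (l - α) ^ 2

theorem entropyRate_lt_entropyRate {l0 α C lstar l : ℝ} (hl0 : 0 < l0) (hlstar : 0 < lstar)
    (hcrit : C ^ 2 * (lstar - α) + log (lstar / l0) = 0) (hl : 0 < l) (hne : l ≠ lstar) :
    entropyRate l0 α C lstar < entropyRate l0 α C l := by
  have hdiff : entropyRate l0 α C l - entropyRate l0 α C lstar
      = (lstar - l) - l * log (lstar / l) + C ^ 2 / 2 * (l - lstar) ^ 2 := by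
    rw [log_div hlstar.ne' hl0.ne'] at hcrit
    rw [entropyRate, entropyRate, log_div hl.ne' hl0.ne', log_div hlstar.ne' hl0.ne',
      log_div hlstar.ne' hl.ne']
    linear_combination (l - lstar) * hcrit
  have hlog : l * log (lstar / l) < lstar - l := by
    have h := log_lt_sub_one_of_pos (div_pos hlstar hl)
      (by rwa [ne_eq, div_eq_one_iff_eq hl.ne', eq_comm])
    calc l * log (lstar / l) < l * (lstar / l - 1) := mul_lt_mul_of_pos_left h hl
      _ = lstar - l := by field_simp
  nlinarith [sq_nonneg (l - lstar), sq_nonneg C]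

theorem exists_pos_weights (u v : ℝ) {l1 l2 t : ℝ} (hl1 : 0 < l1) (hl2 : 0 < l2) (ht : 0 < t) :
    ∃ p q, 0 < p ∧ 0 < q ∧ p + q = t ∧
      (l2 * u + l1 * v) / (l1 + l2) * t
        + l1 * (u - v) / (l1 + l2) ^ 2 * (1 - exp (-(l1 + l2) * t)) = p * u + q * v := by
  set Λ := l1 + l2
  have hΛ : 0 < Λ := add_pos hl1 hl2
  have hE : exp (-Λ * t) < 1 := exp_lt_one_iff.mpr (by nlinarith)
  have hE' : -Λ * t + 1 < exp (-Λ * t) := add_one_lt_exp (by nlinarith)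
  refine ⟨(Λ * l2 * t + l1 * (1 - exp (-Λ * t))) / Λ ^ 2,
    l1 * (Λ * t - (1 - exp (-Λ * t))) / Λ ^ 2, ?_, ?_, ?_, ?_⟩
  · have : 0 < 1 - exp (-Λ * t) := by linarith
    positivity
  · have : 0 < Λ * t - (1 - exp (-Λ * t)) := by linarith
    positivity
  · field_simp
    ring
  · field_simp
    ring

theorem le_weighted_sum_and_eq_iff {f : ℝ → ℝ} {S : Set ℝ} {s x y p q : ℝ}
    (hmin : ∀ z ∈ S, z ≠ s → f s < f z) (hx : x ∈ S) (hy : y ∈ S) (hp : 0 < p) (hq : 0 < q) :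
    f s * (p + q) ≤ p * f x + q * f y ∧ (p * f x + q * f y = f s * (p + q) ↔ x = s ∧ y = s) := by
  have hle : ∀ z ∈ S, f s ≤ f z := fun z hz ↦ by
    rcases eq_or_ne z s with rfl | hne
    · rfl
    · exact (hmin z hz hne).le
  have hfx := hle x hx
  have hfy := hle y hy
  refine ⟨by nlinarith, fun heq ↦ ⟨?_, ?_⟩, fun ⟨hxs, hys⟩ ↦ by rw [hxs, hys]; ring⟩
  · by_contra hne
    nlinarith [hmin x hx hne]
  · by_contra hne
    nlinarith [hmin y hy hne]

theorem stmt15_general (l0 α C : ℝ) (hl0 : 0 < l0)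
    (b : ℝ → ℝ)
    (hb : ∀ l, b l = l0 - l + l * Real.log (l / l0) + C ^ 2 / 2 * (l - α) ^ 2)
    (lstar : ℝ) (hlstar : 0 < lstar)
    (hcrit : C ^ 2 * (lstar - α) + Real.log (lstar / l0) = 0)
    (B A1 A2 : ℝ → ℝ → ℝ) (H1 H2 : ℝ → ℝ → ℝ → ℝ)
    (hB : ∀ l1 l2, B l1 l2 = (l2 * b l1 + l1 * b l2) / (l1 + l2))
    (hA1 : ∀ l1 l2, A1 l1 l2 = l1 * (b l1 - b l2) / (l1 + l2) ^ 2)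
    (hA2 : ∀ l1 l2, A2 l1 l2 = l2 * (b l2 - b l1) / (l1 + l2) ^ 2)
    (hH1 : ∀ t l1 l2, H1 t l1 l2
      = B l1 l2 * t + A1 l1 l2 * (1 - Real.exp (-(l1 + l2) * t)))
    (hH2 : ∀ t l1 l2, H2 t l1 l2
      = B l1 l2 * t + A2 l1 l2 * (1 - Real.exp (-(l1 + l2) * t))) :
    ∀ t, 0 < t → ∀ l1, 0 < l1 → ∀ l2, 0 < l2 →
      (b lstar * t ≤ H1 t l1 l2 ∧ b lstar * t ≤ H2 t l1 l2) ∧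
      (H1 t l1 l2 = b lstar * t ↔ l1 = lstar ∧ l2 = lstar) ∧
      (H2 t l1 l2 = b lstar * t ↔ l1 = lstar ∧ l2 = lstar) := by
  intro t ht l1 hl1 l2 hl2
  obtain rfl : b = entropyRate l0 α C := funext hb
  have hmin : ∀ z ∈ Ioi 0, z ≠ lstar → entropyRate l0 α C lstar < entropyRate l0 α C z :=
    fun z hz hne ↦ entropyRate_lt_entropyRate hl0 hlstar hcrit hz hne
  obtain ⟨p1, q1, hp1, hq1, rfl, hH1_eq⟩ := exists_pos_weights (entropyRate l0 α C l1)
    (entropyRate l0 α C l2) hl1 hl2 ht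
  obtain ⟨p2, q2, hp2, hq2, hsum2, hH2_eq⟩ := exists_pos_weights (entropyRate l0 α C l2)
    (entropyRate l0 α C l1) hl2 hl1 ht
  rw [add_comm l2 l1, add_comm (l1 * _)] at hH2_eq
  rw [hH1, hH2, hB, hA1, hA2, hH1_eq, hH2_eq]
  obtain ⟨hle1, hiff1⟩ := le_weighted_sum_and_eq_iff hmin hl1 hl2 hp1 hq1
  obtain ⟨hle2, hiff2⟩ := le_weighted_sum_and_eq_iff hmin hl2 hl1 hp2 hq2
  rw [hsum2] at hle2 hiff2
  exact ⟨⟨hle1, hle2⟩, hiff1, hiff2.trans and_comm⟩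

/-- Symmetric case of the minimal entropy martingale measure problem: with a common
entropy rate `b` and its unique minimizer `λ*` on `(0, ∞)`, for every horizon `t > 0`
the relative entropy functions satisfy `Hᵢ(t; λ₁, λ₂) ≥ b(λ*) t`, with equality iff
`λ₁ = λ₂ = λ*`; so the minimizer `(λ*, λ*)` is unique and does not depend on `t`. -/
theorem stmt15 (l0 α C : ℝ) (hl0 : 0 < l0) (hC : C ≠ 0)
    (b : ℝ → ℝ)
    (hb : ∀ l, b l = l0 - l + l * Real.log (l / l0) + C ^ 2 / 2 * (l - α) ^ 2)
    (lstar : ℝ) (hlstar : 0 < lstar)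
    (hcrit : C ^ 2 * (lstar - α) + Real.log (lstar / l0) = 0)
    (B A1 A2 : ℝ → ℝ → ℝ) (H1 H2 : ℝ → ℝ → ℝ → ℝ)
    (hB : ∀ l1 l2, B l1 l2 = (l2 * b l1 + l1 * b l2) / (l1 + l2))
    (hA1 : ∀ l1 l2, A1 l1 l2 = l1 * (b l1 - b l2) / (l1 + l2) ^ 2)
    (hA2 : ∀ l1 l2, A2 l1 l2 = l2 * (b l2 - b l1) / (l1 + l2) ^ 2)
    (hH1 : ∀ t l1 l2, H1 t l1 l2
      = B l1 l2 * t + A1 l1 l2 * (1 - Real.exp (-(l1 + l2) * t)))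
    (hH2 : ∀ t l1 l2, H2 t l1 l2
      = B l1 l2 * t + A2 l1 l2 * (1 - Real.exp (-(l1 + l2) * t))) :
    ∀ t, 0 < t → ∀ l1, 0 < l1 → ∀ l2, 0 < l2 →
      (b lstar * t ≤ H1 t l1 l2 ∧ b lstar * t ≤ H2 t l1 l2) ∧
      (H1 t l1 l2 = b lstar * t ↔ l1 = lstar ∧ l2 = lstar) ∧
      (H2 t l1 l2 = b lstar * t ↔ l1 = lstar ∧ l2 = lstar) :=
  stmt15_general l0 α C hl0 b hb lstar hlstar hcrit B A1 A2 H1 H2 hB hA1 hA2 hH1 hH2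
end
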